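/- Let v and w be points in ℝ² with |v − w| = x ≤ 1, and suppose the closed unit disk C(v) around v lies entirely in a region R. If a point p is sampled uniformly at random from C(v), then the probability that p ∉ C(w) equals (1/π)(π − 2(arccos(x/2) − (1/2)·sin(2·arccos(x/2)))). -/

import Mathlib

/-
The intersection of two unit disks whose centres are at distance `2 cos θ` is a lens. After
moving the centres to `0` and `(0, 2 cos θ)` by an isometry, its section over `t` (a segment
parallel to the line of centres) has length `2 √(1 - t²) - 2 cos θ` for `|t| ≤ sin θ`, and is
empty otherwise. Integrating, with `arcsin t + t √(1 - t²)` as antiderivative of `2 √(1 - t²)`,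
gives the area `2θ - sin 2θ`, which is subtracted from the area `π` of the disk.
-/

open Real MeasureTheory Metric

section Congr

variable {E : Type*} [NormedAddCommGroup E] [InnerProductSpace ℝ E] [FiniteDimensional ℝ E]
  [MeasurableSpace E] [BorelSpace E]

theorem exists_isometry_measurePreserving_map_pair {v w v' w' : E} (h : dist v w = dist v' w') :
    ∃ f : E → E, Isometry f ∧ MeasurePreserving f ∧ f v' = v ∧ f w' = w := by
  set L := Submodule.reflection (ℝ ∙ (w' - v' - (w - v)))ᗮ
  have hL : L (w' - v') = w - v :=
    Submodule.reflection_sub (by rw [← dist_eq_norm, ← dist_eq_norm, dist_comm, ← h, dist_comm])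
  refine ⟨fun p => L (p - v') + v, ?_, ?_, by simp, by simp [hL]⟩
  · exact (IsometryEquiv.addRight v).isometry.comp
      (L.isometry.comp (IsometryEquiv.subRight v').isometry)
  · exact (measurePreserving_add_right volume v).comp
      (L.measurePreserving.comp (measurePreserving_sub_right volume v'))

theorem volume_closedBall_inter_closedBall_congr {v w v' w' : E} (h : dist v w = dist v' w')
    (r s : ℝ) :
    volume (closedBall v r ∩ closedBall w s) = volume (closedBall v' r ∩ closedBall w' s) := by
  obtain ⟨f, hf, hmp, rfl, rfl⟩ := exists_isometry_measurePreserving_map_pair h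
  rw [← hmp.measure_preimage
      (measurableSet_closedBall.inter measurableSet_closedBall).nullMeasurableSet,
    Set.preimage_inter, hf.preimage_closedBall, hf.preimage_closedBall]

end Congr

theorem volume_setOf_sq_le_and_sub_sq_le (c : ℝ) {x : ℝ} (hx : 0 ≤ x) :
    volume {b : ℝ | b ^ 2 ≤ c ∧ (b - x) ^ 2 ≤ c} = ENNReal.ofReal (2 * √c - x) := by
  rcases le_or_gt 0 c with hc | hc
  · have hIcc : {b : ℝ | b ^ 2 ≤ c ∧ (b - x) ^ 2 ≤ c} = Set.Icc (x - √c) √c := by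
      ext b
      simp only [Set.mem_ofPred_eq, Set.mem_Icc, Real.sq_le hc]
      constructor
      · rintro ⟨⟨-, h₁⟩, h₂, -⟩
        constructor <;> linarith
      · rintro ⟨h₁, h₂⟩
        refine ⟨⟨?_, ?_⟩, ?_, ?_⟩ <;> linarith [Real.sqrt_nonneg c]
    rw [hIcc, Real.volume_Icc]
    congr 1
    ring
  · have hempty : {b : ℝ | b ^ 2 ≤ c ∧ (b - x) ^ 2 ≤ c} = ∅ :=
      Set.eq_empty_of_forall_notMem fun b hb => by nlinarith [sq_nonneg b, hb.1]
    rw [hempty, measure_empty, Real.sqrt_eq_zero'.2 hc.le, ENNReal.ofReal_eq_zero.2 (by linarith)]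

theorem hasDerivAt_arcsin_add_mul_sqrt_one_sub_sq {a : ℝ} (h₁ : -1 < a) (h₂ : a < 1) :
    HasDerivAt (fun t => arcsin t + t * √(1 - t ^ 2)) (2 * √(1 - a ^ 2)) a := by
  have hpos : 0 < 1 - a ^ 2 := by nlinarith
  have hsqrt : HasDerivAt (fun t => √(1 - t ^ 2)) (-(2 * a) / (2 * √(1 - a ^ 2))) a :=
    (((hasDerivAt_pow 2 a).const_sub 1).congr_deriv (by ring)).sqrt hpos.ne'
  refine ((hasDerivAt_arcsin h₁.ne' h₂.ne).add ((hasDerivAt_id' a).mul hsqrt)).congr_deriv ?_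
  have hsq := Real.sq_sqrt hpos.le
  have hne := (Real.sqrt_pos.2 hpos).ne'
  field_simp
  linarith

theorem integral_two_mul_sqrt_one_sub_sq {a b : ℝ} (ha : -1 ≤ a) (hab : a ≤ b) (hb : b ≤ 1) :
    ∫ t in a..b, 2 * √(1 - t ^ 2) =
      arcsin b + b * √(1 - b ^ 2) - (arcsin a + a * √(1 - a ^ 2)) :=
  intervalIntegral.integral_eq_sub_of_hasDerivAt_of_le hab (by fun_prop)
    (fun t ht => hasDerivAt_arcsin_add_mul_sqrt_one_sub_sq (by linarith [ht.1])
      (by linarith [ht.2]))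
    ((by fun_prop : Continuous fun t : ℝ => 2 * √(1 - t ^ 2)).intervalIntegrable _ _)

theorem integral_two_mul_sqrt_one_sub_sq_sub_two_mul_cos {θ : ℝ} (h₀ : 0 ≤ θ) (h₁ : θ ≤ π / 2) :
    ∫ t in -sin θ..sin θ, (2 * √(1 - t ^ 2) - 2 * cos θ) = 2 * θ - sin (2 * θ) := by
  have hsin : 0 ≤ sin θ := sin_nonneg_of_nonneg_of_le_pi h₀ (by linarith [pi_pos])
  have hcos : √(1 - sin θ ^ 2) = cos θ := by
    rw [← cos_sq', sqrt_sq (cos_nonneg_of_mem_Icc ⟨by linarith [pi_pos], h₁⟩)]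
  rw [intervalIntegral.integral_sub
    ((by fun_prop : Continuous fun t : ℝ => 2 * √(1 - t ^ 2)).intervalIntegrable _ _)
    intervalIntegrable_const,
    integral_two_mul_sqrt_one_sub_sq (by linarith [sin_le_one θ]) (by linarith)
      (sin_le_one θ), intervalIntegral.integral_const, arcsin_neg, neg_sq, hcos,
    arcsin_sin (by linarith [pi_pos]) h₁, sin_two_mul]
  simp only [smul_eq_mul]
  ring

theorem lintegral_ofReal_two_mul_sqrt_one_sub_sq_sub_two_mul_cos {θ : ℝ} (h₀ : 0 ≤ θ)
    (h₁ : θ ≤ π / 2) :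
    ∫⁻ t, ENNReal.ofReal (2 * √(1 - t ^ 2) - 2 * cos θ) = ENNReal.ofReal (2 * θ - sin (2 * θ)) := by
  have hsin : 0 ≤ sin θ := sin_nonneg_of_nonneg_of_le_pi h₀ (by linarith [pi_pos])
  have hcos : 0 ≤ cos θ := cos_nonneg_of_mem_Icc ⟨by linarith [pi_pos], h₁⟩
  have hsupp : (fun t => ENNReal.ofReal (2 * √(1 - t ^ 2) - 2 * cos θ)).support ⊆
      Set.Icc (-sin θ) (sin θ) := by
    intro t ht
    have : cos θ < √(1 - t ^ 2) := by
      simpa [ENNReal.ofReal_eq_zero, not_le, sub_pos] using ht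
    rw [lt_sqrt hcos, cos_sq'] at this
    exact abs_le_of_sq_le_sq' (by linarith) hsin
  have hnonneg : ∀ t ∈ Set.Icc (-sin θ) (sin θ), 0 ≤ 2 * √(1 - t ^ 2) - 2 * cos θ := by
    intro t ht
    have : t ^ 2 ≤ sin θ ^ 2 := sq_le_sq' ht.1 ht.2
    have : cos θ ≤ √(1 - t ^ 2) := le_sqrt_of_sq_le (by linarith [cos_sq' θ])
    linarith
  calc ∫⁻ t, ENNReal.ofReal (2 * √(1 - t ^ 2) - 2 * cos θ)
      = ∫⁻ t in Set.Icc (-sin θ) (sin θ), ENNReal.ofReal (2 * √(1 - t ^ 2) - 2 * cos θ) :=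
        (setLIntegral_eq_of_support_subset hsupp).symm
    _ = ENNReal.ofReal (∫ t in Set.Icc (-sin θ) (sin θ), (2 * √(1 - t ^ 2) - 2 * cos θ)) :=
        (ofReal_integral_eq_lintegral_ofReal (Continuous.integrableOn_Icc (by fun_prop))
          ((ae_restrict_iff' measurableSet_Icc).2 (ae_of_all _ hnonneg))).symm
    _ = ENNReal.ofReal (2 * θ - sin (2 * θ)) := by
        rw [integral_Icc_eq_integral_Ioc, ← intervalIntegral.integral_of_le (by linarith),
          integral_two_mul_sqrt_one_sub_sq_sub_two_mul_cos h₀ h₁]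

theorem volume_lens_prod (θ : ℝ) (h₀ : 0 ≤ θ) (h₁ : θ ≤ π / 2) :
    volume {p : ℝ × ℝ | p.1 ^ 2 + p.2 ^ 2 ≤ 1 ∧ p.1 ^ 2 + (p.2 - 2 * cos θ) ^ 2 ≤ 1} =
      ENNReal.ofReal (2 * θ - sin (2 * θ)) := by
  have hmeas : MeasurableSet
      {p : ℝ × ℝ | p.1 ^ 2 + p.2 ^ 2 ≤ 1 ∧ p.1 ^ 2 + (p.2 - 2 * cos θ) ^ 2 ≤ 1} := by
    rw [Set.ofPred_and]
    exact (measurableSet_le (by fun_prop) (by fun_prop)).inter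
        (measurableSet_le (by fun_prop) (by fun_prop))
  have hslice : ∀ a : ℝ, Prod.mk a ⁻¹'
      {p : ℝ × ℝ | p.1 ^ 2 + p.2 ^ 2 ≤ 1 ∧ p.1 ^ 2 + (p.2 - 2 * cos θ) ^ 2 ≤ 1} =
      {b | b ^ 2 ≤ 1 - a ^ 2 ∧ (b - 2 * cos θ) ^ 2 ≤ 1 - a ^ 2} := by
    intro a
    ext b
    simp only [Set.mem_preimage, Set.mem_ofPred_eq, le_sub_iff_add_le']
  have hcos : 0 ≤ 2 * cos θ := by linarith [cos_nonneg_of_mem_Icc ⟨by linarith [pi_pos], h₁⟩]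
  rw [Measure.volume_eq_prod, Measure.prod_apply hmeas]
  simp only [hslice, volume_setOf_sq_le_and_sub_sq_le _ hcos]
  exact lintegral_ofReal_two_mul_sqrt_one_sub_sq_sub_two_mul_cos h₀ h₁

theorem EuclideanSpace.volume_closedBall_inter_closedBall_fin_two
    {v w : EuclideanSpace ℝ (Fin 2)} (h : dist v w ≤ 2) :
    volume (closedBall v 1 ∩ closedBall w 1) =
      ENNReal.ofReal (2 * arccos (dist v w / 2) - sin (2 * arccos (dist v w / 2))) := by
  set θ := arccos (dist v w / 2)
  have hθ : 2 * cos θ = dist v w := by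
    rw [cos_arccos (by linarith [dist_nonneg (x := v) (y := w)]) (by linarith)]
    ring
  let e : EuclideanSpace ℝ (Fin 2) := EuclideanSpace.single 1 (2 * cos θ)
  have he : dist v w = dist 0 e := by
    rw [dist_zero_left, PiLp.norm_single, norm_eq_abs, hθ, abs_of_nonneg dist_nonneg]
  let c : EuclideanSpace ℝ (Fin 2) ≃ᵐ ℝ × ℝ :=
    (MeasurableEquiv.toLp 2 (Fin 2 → ℝ)).symm.trans MeasurableEquiv.finTwoArrow
  have hc : MeasurePreserving c := (volume_preserving_finTwoArrow ℝ).comp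
    (EuclideanSpace.volume_preserving_symm_measurableEquiv_toLp (Fin 2))
  have hpre : c ⁻¹'
      {p : ℝ × ℝ | p.1 ^ 2 + p.2 ^ 2 ≤ 1 ∧ p.1 ^ 2 + (p.2 - 2 * cos θ) ^ 2 ≤ 1} =
      closedBall 0 1 ∩ closedBall e 1 := by
    ext q
    simp [c, e, MeasurableEquiv.finTwoArrow, EuclideanSpace.norm_eq, EuclideanSpace.dist_eq,
      Fin.sum_univ_two, Real.dist_eq, sqrt_le_one, sq_abs]
  rw [volume_closedBall_inter_closedBall_congr he, ← hpre, hc.measure_preimage_equiv,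
    volume_lens_prod θ (arccos_nonneg _) (arccos_le_pi_div_two.2 (by positivity))]

theorem prob_not_in_neighbor_disk_general
    (v w : EuclideanSpace ℝ (Fin 2)) (x : ℝ)
    (hx : dist v w = x) (hx1 : x ≤ 1) :
    (volume (closedBall v 1 \ closedBall w 1)).toReal / π =
      (1 / π) * (π - 2 * (arccos (x / 2) - (1 / 2) * sin (2 * arccos (x / 2)))) := by
  subst hx
  have hlens_nonneg : 0 ≤ 2 * arccos (dist v w / 2) - sin (2 * arccos (dist v w / 2)) :=
    sub_nonneg.2 (sin_le (by positivity [arccos_nonneg (dist v w / 2)]))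
  rw [← measureReal_def, ← Set.sdiff_self_inter,
    measureReal_sdiff Set.inter_subset_left
      (measurableSet_closedBall.inter measurableSet_closedBall) measure_closedBall_lt_top.ne,
    measureReal_def, measureReal_def, EuclideanSpace.volume_closedBall_fin_two,
    EuclideanSpace.volume_closedBall_inter_closedBall_fin_two (by linarith),
    ENNReal.toReal_ofReal hlens_nonneg]
  simp only [ENNReal.ofReal_one, one_pow, one_mul, ENNReal.toReal_ofReal pi_pos.le, one_div]
  field_simp

theorem prob_not_in_neighbor_disk
    (R : Set (EuclideanSpace ℝ (Fin 2)))
    (v w : EuclideanSpace ℝ (Fin 2)) (x : ℝ)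
    (hx : dist v w = x) (hx1 : x ≤ 1)
    (hR : closedBall v 1 ⊆ R) :
    (volume (closedBall v 1 \ closedBall w 1)).toReal / π =
      (1 / π) * (π - 2 * (arccos (x / 2) - (1 / 2) * sin (2 * arccos (x / 2)))) :=
  prob_not_in_neighbor_disk_general v w x hx hx1
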